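/- arXiv:1303.4464 — 3 statements merged into one kernel-verified Lean document; each statement's English description precedes it below -/
import Mathlib

section
/- The congruence lattice of any lattice is a distributive lattice. -/
set_option linter.unusedVariables false

/-- A congruence of a lattice: an equivalence relation compatible with `⊔` and `⊓`. -/
structure LatticeCon' (L : Type*) [Lattice L] where
  r : L → L → Prop
  refl : ∀ a, r a a
  symm : ∀ {a b}, r a b → r b a
  trans : ∀ {a b c}, r a b → r b c → r a c
  sup_comp : ∀ {a b c d}, r a b → r c d → r (a ⊔ c) (b ⊔ d)
  inf_comp : ∀ {a b c d}, r a b → r c d → r (a ⊓ c) (b ⊓ d)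

namespace LatticeCon'

variable {L : Type*} [Lattice L]

theorem ext' : ∀ {θ φ : LatticeCon' L}, θ.r = φ.r → θ = φ := by
  rintro ⟨r, _, _, _, _, _⟩ ⟨r', _, _, _, _, _⟩ rfl; rfl

/-- Congruences ordered by inclusion (refinement). -/
instance : PartialOrder (LatticeCon' L) where
  le θ φ := ∀ a b, θ.r a b → φ.r a b
  le_refl θ a b h := h
  le_trans θ φ ψ h1 h2 a b h := h2 a b (h1 a b h)
  le_antisymm θ φ h1 h2 := ext' (by funext a b; exact propext ⟨h1 a b, h2 a b⟩)

/-- The lattice of congruences: meet is intersection, join is the congruence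
generated by the union. -/
instance : Lattice (LatticeCon' L) :=
  { (inferInstance : PartialOrder (LatticeCon' L)) with
    inf := fun θ φ =>
      ⟨fun a b => θ.r a b ∧ φ.r a b,
        fun a => ⟨θ.refl a, φ.refl a⟩,
        fun h => ⟨θ.symm h.1, φ.symm h.2⟩,
        fun h h' => ⟨θ.trans h.1 h'.1, φ.trans h.2 h'.2⟩,
        fun h h' => ⟨θ.sup_comp h.1 h'.1, φ.sup_comp h.2 h'.2⟩,
        fun h h' => ⟨θ.inf_comp h.1 h'.1, φ.inf_comp h.2 h'.2⟩⟩
    inf_le_left := fun θ φ a b h => h.1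
    inf_le_right := fun θ φ a b h => h.2
    le_inf := fun θ φ ψ h1 h2 a b h => ⟨h1 a b h, h2 a b h⟩
    sup := fun θ φ =>
      ⟨fun a b => ∀ ψ : LatticeCon' L, θ ≤ ψ → φ ≤ ψ → ψ.r a b,
        fun a ψ _ _ => ψ.refl a,
        fun h ψ h1 h2 => ψ.symm (h ψ h1 h2),
        fun h h' ψ h1 h2 => ψ.trans (h ψ h1 h2) (h' ψ h1 h2),
        fun h h' ψ h1 h2 => ψ.sup_comp (h ψ h1 h2) (h' ψ h1 h2),
        fun h h' ψ h1 h2 => ψ.inf_comp (h ψ h1 h2) (h' ψ h1 h2)⟩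
    le_sup_left := fun θ φ a b h ψ h1 _ => h1 a b h
    le_sup_right := fun θ φ a b h ψ _ h2 => h2 a b h
    sup_le := fun θ φ ψ h1 h2 a b h => h ψ h1 h2 }

/-- Arbitrary intersections of congruences. -/
instance : InfSet (LatticeCon' L) where
  sInf S :=
    ⟨fun a b => ∀ θ ∈ S, θ.r a b,
      fun a θ _ => θ.refl a,
      fun h θ hθ => θ.symm (h θ hθ),
      fun h h' θ hθ => θ.trans (h θ hθ) (h' θ hθ),
      fun h h' θ hθ => θ.sup_comp (h θ hθ) (h' θ hθ),
      fun h h' θ hθ => θ.inf_comp (h θ hθ) (h' θ hθ)⟩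

/-- The principal congruence generated by a pair `(a, b)`. -/
noncomputable def conGen (a b : L) : LatticeCon' L :=
  sInf {θ : LatticeCon' L | θ.r a b}

end LatticeCon'

/-!
The join of two congruences is the reflexive-transitive closure of their union. If `θ a b` and
`a, b` are joined by a chain of `φ`- and `ψ`-steps, push the chain into the interval
`[a ⊓ b, a ⊔ b]` by `x ↦ (x ⊔ (a ⊓ b)) ⊓ (a ⊔ b)`. This map fixes `a` and `b`, preserves
every congruence, and the whole interval lies in one `θ`-class; so each projected step is a
`θ ⊓ φ`- or a `θ ⊓ ψ`-step.
-/

open Relation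

namespace LatticeCon'

variable {L : Type*} [Lattice L]

theorem r_inf_sup (θ : LatticeCon' L) {a b : L} (h : θ.r a b) : θ.r (a ⊓ b) (a ⊔ b) := by
  have h₁ : θ.r (a ⊓ b) b := by simpa using θ.inf_comp h (θ.refl b)
  have h₂ : θ.r (a ⊔ b) b := by simpa using θ.sup_comp h (θ.refl b)
  exact θ.trans h₁ (θ.symm h₂)

theorem r_of_mem_Icc (θ : LatticeCon' L) {p q x y : L} (hpq : θ.r p q)
    (hx : x ∈ Set.Icc p q) (hy : y ∈ Set.Icc p q) : θ.r x y := by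
  have hp : ∀ z ∈ Set.Icc p q, θ.r p z := fun z hz => by
    simpa [inf_eq_right.2 hz.1, inf_eq_left.2 hz.2] using θ.inf_comp (θ.refl z) hpq
  exact θ.trans (θ.symm (hp x hx)) (hp y hy)

theorem r_sup_inf (θ : LatticeCon' L) (p q : L) {x y : L} (h : θ.r x y) :
    θ.r ((x ⊔ p) ⊓ q) ((y ⊔ p) ⊓ q) :=
  θ.inf_comp (θ.sup_comp h (θ.refl p)) (θ.refl q)

theorem reflTransGen_map {φ ψ : LatticeCon' L} (f : L → L)
    (hφ : ∀ {x y}, φ.r x y → φ.r (f x) (f y)) (hψ : ∀ {x y}, ψ.r x y → ψ.r (f x) (f y)) {a b : L}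
    (h : ReflTransGen (fun x y => φ.r x y ∨ ψ.r x y) a b) :
    ReflTransGen (fun x y => φ.r x y ∨ ψ.r x y) (f a) (f b) :=
  h.lift f fun _ _ hs => hs.imp hφ hψ

def chainCon (φ ψ : LatticeCon' L) : LatticeCon' L where
  r := ReflTransGen fun a b => φ.r a b ∨ ψ.r a b
  refl _ := .refl
  symm h := ReflTransGen.mono (fun _ _ hs => hs.imp φ.symm ψ.symm) _ _ (ReflTransGen.swap _ _ h)
  trans := ReflTransGen.trans
  sup_comp {_ b c _} h h' :=
    (reflTransGen_map (· ⊔ c) (φ.sup_comp · (φ.refl c)) (ψ.sup_comp · (ψ.refl c)) h).trans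
      (reflTransGen_map (b ⊔ ·) (φ.sup_comp (φ.refl b)) (ψ.sup_comp (ψ.refl b)) h')
  inf_comp {_ b c _} h h' :=
    (reflTransGen_map (· ⊓ c) (φ.inf_comp · (φ.refl c)) (ψ.inf_comp · (ψ.refl c)) h).trans
      (reflTransGen_map (b ⊓ ·) (φ.inf_comp (φ.refl b)) (ψ.inf_comp (ψ.refl b)) h')

theorem r_sup_iff {φ ψ : LatticeCon' L} {a b : L} :
    (φ ⊔ ψ).r a b ↔ ReflTransGen (fun x y => φ.r x y ∨ ψ.r x y) a b := by
  refine ⟨fun h => ?_, fun h => ?_⟩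
  · have hle : φ ⊔ ψ ≤ chainCon φ ψ :=
      sup_le (fun _ _ h => .single (.inl h)) fun _ _ h => .single (.inr h)
    exact hle a b h
  · induction h with
    | refl => exact (φ ⊔ ψ).refl a
    | tail _ hs ih =>
      exact (φ ⊔ ψ).trans ih <|
        hs.elim ((le_sup_left : φ ≤ φ ⊔ ψ) _ _) ((le_sup_right : ψ ≤ φ ⊔ ψ) _ _)

end LatticeCon'

/-- The congruence lattice of any lattice is distributive. -/
theorem conLat_distrib (L : Type*) [Lattice L] (θ φ ψ : LatticeCon' L) :
    θ ⊓ (φ ⊔ ψ) = (θ ⊓ φ) ⊔ (θ ⊓ ψ) := by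
  refine le_antisymm ?_ le_inf_sup
  rintro a b ⟨hθ, hchain⟩
  rw [LatticeCon'.r_sup_iff] at hchain ⊢
  set p := a ⊓ b
  set q := a ⊔ b
  have hpq : p ≤ q := inf_le_sup
  have hIcc : ∀ x, (x ⊔ p) ⊓ q ∈ Set.Icc p q := fun x =>
    ⟨le_inf le_sup_right hpq, inf_le_right⟩
  have hθ' : ∀ x y, θ.r ((x ⊔ p) ⊓ q) ((y ⊔ p) ⊓ q) := fun x y =>
    θ.r_of_mem_Icc (θ.r_inf_sup hθ) (hIcc x) (hIcc y)
  have hfix : ∀ x ∈ Set.Icc p q, (x ⊔ p) ⊓ q = x := fun x hx => by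
    rw [sup_eq_left.2 hx.1, inf_eq_left.2 hx.2]
  have hlift : ReflTransGen (fun x y => (θ ⊓ φ).r x y ∨ (θ ⊓ ψ).r x y)
      ((a ⊔ p) ⊓ q) ((b ⊔ p) ⊓ q) :=
    hchain.lift (fun x => (x ⊔ p) ⊓ q) fun x y hs =>
      hs.imp (⟨hθ' x y, φ.r_sup_inf p q ·⟩) (⟨hθ' x y, ψ.r_sup_inf p q ·⟩)
  rwa [hfix a ⟨inf_le_left, le_sup_left⟩, hfix b ⟨inf_le_right, le_sup_right⟩] at hlift
end

section
/- In a finite semimodular lattice, all maximal chains between two fixed elements have the same length (Jordan–Hölder chain condition). -/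
/-!
Induct on the length of one chain. Two maximal chains from `x` to `y` either share their
second element, and the induction hypothesis applies to their tails, or start with distinct
covers `a` and `b` of `x = a ⊓ b`. In the latter case semimodularity makes `a ⊔ b` cover both,
and any maximal chain from `a ⊔ b` to `y` (one exists since the lattice is finite), prefixed with
`a` or with `b`, is compared with each tail in turn by the induction hypothesis.
-/

/-- Maximal chains. -/
abbrev CovBySeries (α : Type*) [Preorder α] := RelSeries {(a, b) : α × α | a ⋖ b}

theorem CovBy.inf_eq_of_ne {α : Type*} [SemilatticeInf α] {x a b : α} (ha : x ⋖ a) (hb : x ⋖ b)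
    (hab : a ≠ b) : a ⊓ b = x := by
  refine (ha.eq_or_eq (le_inf ha.le hb.le) inf_le_left).resolve_right fun h ↦ hab ?_
  exact (hb.eq_or_eq ha.le (inf_eq_left.mp h)).resolve_left ha.ne'

namespace CovBySeries

variable {α : Type*}

section Preorder

variable [Preorder α]

def toLTSeries (p : CovBySeries α) : LTSeries α :=
  p.ofLE fun _ h ↦ CovBy.lt h

lemma head_le_last (p : CovBySeries α) : p.head ≤ p.last :=
  p.toLTSeries.head_le_last

lemma length_eq_zero_iff_head_eq_last (p : CovBySeries α) : p.length = 0 ↔ p.head = p.last := by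
  refine ⟨fun hp ↦ RelSeries.subsingleton_of_length_eq_zero hp p.head_mem p.last_mem,
    fun h ↦ by_contra fun hp ↦ ?_⟩
  have h0 : (0 : Fin (p.length + 1)) < Fin.last _ := by
    simpa [Fin.lt_def, Nat.pos_iff_ne_zero] using hp
  exact (p.toLTSeries.strictMono h0).ne h

lemma head_covBy_head_tail (p : CovBySeries α) (hp : p.length ≠ 0) :
    p.head ⋖ (p.tail hp).head :=
  p.step ⟨0, Nat.pos_of_ne_zero hp⟩

lemma head_tail_le_last (p : CovBySeries α) (hp : p.length ≠ 0) :
    (p.tail hp).head ≤ p.last :=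
  p.last_tail hp ▸ head_le_last (p.tail hp)

end Preorder

theorem exists_head_eq_last_eq [PartialOrder α] [WellFoundedLT α] [WellFoundedGT α] {x y : α}
    (hxy : x ≤ y) : ∃ p : CovBySeries α, p.head = x ∧ p.last = y := by
  obtain ⟨a, rfl, n, rfl, ha⟩ := exists_covBy_seq_of_wellFoundedLT_wellFoundedGT_of_le hxy
  exact ⟨⟨n, fun i ↦ a i, fun i ↦ ha i i.isLt⟩, rfl, rfl⟩

section Lattice

variable [Lattice α] [IsWeakUpperModularLattice α] [WellFoundedLT α] [WellFoundedGT α]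

theorem exists_covBy_head_covBy_head_last_eq {x a b y : α} (ha : x ⋖ a) (hb : x ⋖ b)
    (hab : a ≠ b) (hay : a ≤ y) (hby : b ≤ y) :
    ∃ r : CovBySeries α, a ⋖ r.head ∧ b ⋖ r.head ∧ r.last = y := by
  have hinf : a ⊓ b = x := ha.inf_eq_of_ne hb hab
  obtain ⟨r, hr_head, rfl⟩ := exists_head_eq_last_eq (sup_le hay hby)
  exact ⟨r, hr_head ▸ covBy_sup_of_inf_covBy_of_inf_covBy_left (hinf ▸ ha) (hinf ▸ hb),
    hr_head ▸ covBy_sup_of_inf_covBy_of_inf_covBy_right (hinf ▸ ha) (hinf ▸ hb), rfl⟩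

theorem length_eq_of_head_eq_of_last_eq (p q : CovBySeries α) (hhead : p.head = q.head)
    (hlast : p.last = q.last) : p.length = q.length := by
  induction hn : p.length using Nat.strong_induction_on generalizing p q with
  | _ n ih =>
  subst hn
  have ih' (p' q' : CovBySeries α) (h : p'.length < p.length) (hhead : p'.head = q'.head)
      (hlast : p'.last = q'.last) : p'.length = q'.length := ih _ h p' q' hhead hlast rfl
  have hzero : p.length = 0 ↔ q.length = 0 := by
    simp only [length_eq_zero_iff_head_eq_last, hhead, hlast]
  by_cases hp : p.length = 0
  · rw [hp, hzero.mp hp]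
  have hq : q.length ≠ 0 := hzero.not.mp hp
  obtain ⟨a, ha⟩ : ∃ a, (p.tail hp).head = a := ⟨_, rfl⟩
  obtain ⟨b, hb⟩ : ∃ b, (q.tail hq).head = b := ⟨_, rfl⟩
  by_cases hab : a = b
  · have := ih' (p.tail hp) (q.tail hq) (by rw [RelSeries.tail_length]; omega)
      (by rw [ha, hb, hab]) (by simpa only [RelSeries.last_tail] using hlast)
    simp only [RelSeries.tail_length] at this
    omega
  obtain ⟨r, hra, hrb, hr_last⟩ := exists_covBy_head_covBy_head_last_eq
    (ha ▸ p.head_covBy_head_tail hp) (hhead ▸ hb ▸ q.head_covBy_head_tail hq) hab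
    (ha ▸ p.head_tail_le_last hp) (hlast ▸ hb ▸ q.head_tail_le_last hq)
  have hpr := ih' (p.tail hp) (r.cons a hra) (by rw [RelSeries.tail_length]; omega) ha
    (by rw [RelSeries.last_tail, RelSeries.last_cons, hr_last])
  simp only [RelSeries.tail_length, RelSeries.cons_length] at hpr
  have hrq := ih' (r.cons b hrb) (q.tail hq) (by rw [RelSeries.cons_length]; omega) hb.symm
    (by rw [RelSeries.last_tail, RelSeries.last_cons, hr_last, hlast])
  simp only [RelSeries.tail_length, RelSeries.cons_length] at hrq
  omega

end Lattice

end CovBySeries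

/-- Jordan–Hölder chain condition: in a finite semimodular lattice, all maximal
chains between two fixed elements have the same length. -/
theorem jordan_holder_semimodular (L : Type*) [Lattice L] [Finite L]
    (hsm : ∀ a b : L, a ⊓ b ⋖ a → b ⋖ a ⊔ b)
    (x y : L) (k m : ℕ) (c : Fin (k + 1) → L) (d : Fin (m + 1) → L)
    (hc0 : c 0 = x) (hck : c (Fin.last k) = y)
    (hd0 : d 0 = x) (hdm : d (Fin.last m) = y)
    (hc : ∀ i : Fin k, c i.castSucc ⋖ c i.succ)
    (hd : ∀ i : Fin m, d i.castSucc ⋖ d i.succ) :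
    k = m := by
  have : IsUpperModularLattice L := ⟨hsm _ _⟩
  exact CovBySeries.length_eq_of_head_eq_of_last_eq ⟨k, c, hc⟩ ⟨m, d, hd⟩
    (hc0.trans hd0.symm) (hck.trans hdm.symm)
end

section
/- The join-irreducible elements of the congruence lattice of a finite lattice L are exactly the congruences of the form con(p, q) for prime intervals p ⋖ q of L. -/
set_option linter.unusedVariables false

/-- A congruence of a lattice: an equivalence relation compatible with `⊔` and `⊓`. -/
structure LatticeCong (L : Type*) [Lattice L] where
  r : L → L → Prop
  refl : ∀ a, r a a
  symm : ∀ {a b}, r a b → r b a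
  trans : ∀ {a b c}, r a b → r b c → r a c
  sup_comp : ∀ {a b c d}, r a b → r c d → r (a ⊔ c) (b ⊔ d)
  inf_comp : ∀ {a b c d}, r a b → r c d → r (a ⊓ c) (b ⊓ d)

namespace LatticeCong

variable {L : Type*} [Lattice L]

theorem ext' : ∀ {θ φ : LatticeCong L}, θ.r = φ.r → θ = φ := by
  rintro ⟨r, _, _, _, _, _⟩ ⟨r', _, _, _, _, _⟩ rfl; rfl

/-- Congruences ordered by inclusion (refinement). -/
instance : PartialOrder (LatticeCong L) where
  le θ φ := ∀ a b, θ.r a b → φ.r a b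
  le_refl θ a b h := h
  le_trans θ φ ψ h1 h2 a b h := h2 a b (h1 a b h)
  le_antisymm θ φ h1 h2 := ext' (by funext a b; exact propext ⟨h1 a b, h2 a b⟩)

/-- The lattice of congruences: meet is intersection, join is the congruence
generated by the union. -/
instance : Lattice (LatticeCong L) :=
  { (inferInstance : PartialOrder (LatticeCong L)) with
    inf := fun θ φ =>
      ⟨fun a b => θ.r a b ∧ φ.r a b,
        fun a => ⟨θ.refl a, φ.refl a⟩,
        fun h => ⟨θ.symm h.1, φ.symm h.2⟩,
        fun h h' => ⟨θ.trans h.1 h'.1, φ.trans h.2 h'.2⟩,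
        fun h h' => ⟨θ.sup_comp h.1 h'.1, φ.sup_comp h.2 h'.2⟩,
        fun h h' => ⟨θ.inf_comp h.1 h'.1, φ.inf_comp h.2 h'.2⟩⟩
    inf_le_left := fun θ φ a b h => h.1
    inf_le_right := fun θ φ a b h => h.2
    le_inf := fun θ φ ψ h1 h2 a b h => ⟨h1 a b h, h2 a b h⟩
    sup := fun θ φ =>
      ⟨fun a b => ∀ ψ : LatticeCong L, θ ≤ ψ → φ ≤ ψ → ψ.r a b,
        fun a ψ _ _ => ψ.refl a,
        fun h ψ h1 h2 => ψ.symm (h ψ h1 h2),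
        fun h h' ψ h1 h2 => ψ.trans (h ψ h1 h2) (h' ψ h1 h2),
        fun h h' ψ h1 h2 => ψ.sup_comp (h ψ h1 h2) (h' ψ h1 h2),
        fun h h' ψ h1 h2 => ψ.inf_comp (h ψ h1 h2) (h' ψ h1 h2)⟩
    le_sup_left := fun θ φ a b h ψ h1 _ => h1 a b h
    le_sup_right := fun θ φ a b h ψ _ h2 => h2 a b h
    sup_le := fun θ φ ψ h1 h2 a b h => h ψ h1 h2 }

/-- Arbitrary intersections of congruences. -/
instance : InfSet (LatticeCong L) where
  sInf S :=
    ⟨fun a b => ∀ θ ∈ S, θ.r a b,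
      fun a θ _ => θ.refl a,
      fun h θ hθ => θ.symm (h θ hθ),
      fun h h' θ hθ => θ.trans (h θ hθ) (h' θ hθ),
      fun h h' θ hθ => θ.sup_comp (h θ hθ) (h' θ hθ),
      fun h h' θ hθ => θ.inf_comp (h θ hθ) (h' θ hθ)⟩

/-- The principal congruence generated by a pair `(a, b)`. -/
noncomputable def conGen (a b : L) : LatticeCong L :=
  sInf {θ : LatticeCong L | θ.r a b}

end LatticeCong

/-!
A congruence collapsing `x ≤ y` collapses every interval inside `[x, y]`, in particular every step
of a maximal chain from `x` to `y`; so in a finite lattice every congruence is the join of the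
`conGen p q` over the prime intervals `p ⋖ q` it collapses, and a join-irreducible one is one of
them. Conversely, if `α ⊔ β` collapses `p ⋖ q`, there is a chain of `α`- and `β`-steps from `p`
to `q`. The projection `x ↦ (x ⊔ p) ⊓ q` is preserved by every congruence and takes only the
values `p` and `q`, so it maps some single step onto the pair `p, q`, which is then collapsed by
`α` or by `β`.
-/

namespace LatticeCong

open Relation

variable {L : Type*} [Lattice L]

instance : OrderBot (LatticeCong L) where
  bot := ⟨Eq, fun _ => rfl, Eq.symm, Eq.trans, fun h h' => h ▸ h' ▸ rfl, fun h h' => h ▸ h' ▸ rfl⟩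
  bot_le θ a _ h := h ▸ θ.refl a

theorem r_conGen (a b : L) : (conGen a b).r a b := fun _ hθ => hθ

theorem conGen_le {θ : LatticeCong L} {a b : L} (h : θ.r a b) : conGen a b ≤ θ :=
  fun _ _ hxy => hxy θ h

def Compatible (f : L → L) : Prop :=
  ∀ (θ : LatticeCong L) {a b : L}, θ.r a b → θ.r (f a) (f b)

theorem compatible_sup_left (c : L) : Compatible (c ⊔ ·) :=
  fun θ _ _ h => θ.sup_comp (θ.refl c) h

theorem compatible_sup_right (c : L) : Compatible (· ⊔ c) :=
  fun θ _ _ h => θ.sup_comp h (θ.refl c)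

theorem compatible_inf_left (c : L) : Compatible (c ⊓ ·) :=
  fun θ _ _ h => θ.inf_comp (θ.refl c) h

theorem compatible_inf_right (c : L) : Compatible (· ⊓ c) :=
  fun θ _ _ h => θ.inf_comp h (θ.refl c)

theorem Compatible.comp {f g : L → L} (hg : Compatible g) (hf : Compatible f) :
    Compatible (g ∘ f) :=
  fun θ _ _ h => hg θ (hf θ h)

theorem r_inf_sup {θ : LatticeCong L} {x y : L} (h : θ.r x y) : θ.r (x ⊓ y) (x ⊔ y) := by
  have hx : θ.r (x ⊓ y) x := by simpa using compatible_inf_left x θ (θ.symm h)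
  have hy : θ.r x (x ⊔ y) := by simpa using compatible_sup_left x θ h
  exact θ.trans hx hy

theorem r_of_le_of_le {θ : LatticeCong L} {x y a b : L} (h : θ.r x y) (hxa : x ≤ a) (hab : a ≤ b)
    (hby : b ≤ y) : θ.r a b := by
  have hay : θ.r a y := by
    simpa [hxa, hab.trans hby] using compatible_sup_right a θ h
  simpa [hab, hby] using compatible_inf_right b θ hay

def SupStep (α β : LatticeCong L) (a b : L) : Prop := α.r a b ∨ β.r a b

theorem Compatible.supStep {f : L → L} (hf : Compatible f) {α β : LatticeCong L} {a b : L}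
    (h : SupStep α β a b) : SupStep α β (f a) (f b) :=
  h.imp (hf α) (hf β)

theorem Compatible.reflTransGen_supStep {f : L → L} (hf : Compatible f) {α β : LatticeCong L}
    {a b : L} (h : ReflTransGen (SupStep α β) a b) : ReflTransGen (SupStep α β) (f a) (f b) :=
  h.lift f fun _ _ => hf.supStep

def supChain (α β : LatticeCong L) : LatticeCong L where
  r := ReflTransGen (SupStep α β)
  refl _ := .refl
  symm h :=
    have : Std.Symm (SupStep α β) := ⟨fun _ _ h => h.imp α.symm β.symm⟩
    Std.Symm.symm _ _ h
  trans := .trans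
  sup_comp {_ b c _} h h' :=
    ((compatible_sup_right c).reflTransGen_supStep h).trans
      ((compatible_sup_left b).reflTransGen_supStep h')
  inf_comp {_ b c _} h h' :=
    ((compatible_inf_right c).reflTransGen_supStep h).trans
      ((compatible_inf_left b).reflTransGen_supStep h')

theorem sup_eq_supChain (α β : LatticeCong L) : α ⊔ β = supChain α β := by
  refine le_antisymm (sup_le (fun _ _ h => .single (.inl h)) (fun _ _ h => .single (.inr h)))
    fun a _ h => ?_
  induction h with
  | refl => exact (α ⊔ β).refl a
  | tail _ hstep ih =>
    exact (α ⊔ β).trans ih (hstep.elim (le_sup_left (a := α) _ _) (le_sup_right (b := β) _ _))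

theorem supStep_of_covBy {α β : LatticeCong L} {p q : L} (hpq : p ⋖ q) (h : (α ⊔ β).r p q) :
    SupStep α β p q := by
  let π : L → L := (· ⊓ q) ∘ (· ⊔ p)
  have hπ : Compatible π := (compatible_inf_right q).comp (compatible_sup_right p)
  have hπ_mem (x : L) : π x = p ∨ π x = q :=
    hpq.eq_or_eq (le_inf le_sup_right hpq.le) inf_le_right
  have hπp : π p = p := by simp [π, hpq.le]
  have hπq : π q = q := by simp [π, hpq.le]
  have reach : ∀ y, ReflTransGen (SupStep α β) p y → π y = p ∨ SupStep α β p q := by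
    intro y hy
    induction hy with
    | refl => exact .inl hπp
    | @tail u v _ hstep ih =>
      refine ih.elim (fun hu => (hπ_mem v).imp_right fun hv => ?_) .inr
      simpa only [hu, hv] using hπ.supStep hstep
  rw [sup_eq_supChain] at h
  exact (reach q h).resolve_left (by rw [hπq]; exact hpq.ne')

theorem supIrred_conGen {p q : L} (hpq : p ⋖ q) : SupIrred (conGen p q) := by
  refine ⟨fun hmin => hpq.ne ?_, fun α β h => ?_⟩
  · have := r_conGen p q
    rwa [hmin.eq_bot] at this
  · have hsup : (α ⊔ β).r p q := h ▸ r_conGen p q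
    exact (supStep_of_covBy hpq hsup).imp
      (fun hα => le_antisymm (h ▸ le_sup_left) (conGen_le hα))
      (fun hβ => le_antisymm (h ▸ le_sup_right) (conGen_le hβ))

theorem le_of_forall_covBy [IsStronglyAtomic L] [WellFoundedGT L] {θ φ : LatticeCong L}
    (h : ∀ p q, p ⋖ q → θ.r p q → φ.r p q) : θ ≤ φ := by
  have chain (x : L) : ∀ y, x ≤ y → θ.r x y → φ.r x y := by
    induction x using WellFoundedGT.induction with | _ x ih => ?_
    intro y hxy hθ
    obtain rfl | hlt := hxy.eq_or_lt
    · exact φ.refl x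
    obtain ⟨c, hxc, hcy⟩ := exists_covBy_le_of_lt hlt
    exact φ.trans (h x c hxc (r_of_le_of_le hθ le_rfl hxc.le hcy))
      (ih c hxc.lt y hcy (r_of_le_of_le hθ hxc.le hcy le_rfl))
  intro x y hθ
  have hxy := r_inf_sup hθ
  exact φ.trans (φ.symm (chain _ x inf_le_left (r_of_le_of_le hxy le_rfl inf_le_left le_sup_left)))
    (chain _ y inf_le_right (r_of_le_of_le hxy le_rfl inf_le_right le_sup_right))

theorem exists_finset_sup_conGen_eq [Finite L] (θ : LatticeCong L) :
    ∃ s : Finset (L × L), (∀ pq ∈ s, pq.1 ⋖ pq.2) ∧ s.sup (fun pq => conGen pq.1 pq.2) = θ := by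
  let S : Set (L × L) := {pq | pq.1 ⋖ pq.2 ∧ θ.r pq.1 pq.2}
  let s := (Set.toFinite S).toFinset
  have hS : ∀ {pq}, pq ∈ s ↔ pq ∈ S := Set.Finite.mem_toFinset _
  refine ⟨s, fun pq hpq => (hS.1 hpq).1, le_antisymm ?_ ?_⟩
  · exact Finset.sup_le fun pq hpq => conGen_le (hS.1 hpq).2
  · refine le_of_forall_covBy fun p q hpq hθ => ?_
    have hle : conGen p q ≤ s.sup (fun pq => conGen pq.1 pq.2) :=
      Finset.le_sup (f := fun pq : L × L => conGen pq.1 pq.2) (b := (p, q)) (hS.2 ⟨hpq, hθ⟩)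
    exact hle p q (r_conGen p q)

end LatticeCong

/-- The join-irreducible congruences of a finite lattice are exactly the principal
congruences of prime intervals. -/
theorem conLat_supIrred_iff (L : Type*) [Lattice L] [Finite L] (θ : LatticeCong L) :
    SupIrred θ ↔ ∃ p q : L, p ⋖ q ∧ θ = LatticeCong.conGen p q := by
  refine ⟨fun hθ => ?_, ?_⟩
  · obtain ⟨s, hs, hsup⟩ := LatticeCong.exists_finset_sup_conGen_eq θ
    obtain ⟨pq, hpq, heq⟩ := hθ.finset_sup_eq hsup
    exact ⟨pq.1, pq.2, hs pq hpq, heq.symm⟩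
  · rintro ⟨p, q, hpq, rfl⟩
    exact LatticeCong.supIrred_conGen hpq
end
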